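/- arXiv:1012.4852 — 3 statements merged into one kernel-verified Lean document; each statement's English description precedes it below -/
import Mathlib

section
/- Let M be a nonempty set, let (φ_j)_{j∈ℕ} be functions φ_j : M → ℂ with sup_{x∈M} |φ_j(x)| ≤ 1 for every j, let (k̃(j))_{j∈ℕ} be an absolutely summable sequence of real numbers, let J ⊆ ℕ be finite, and assume k̃(j) > 0 for all j ∉ J. Define k(x,y) := Σ_{j∈ℕ} k̃(j) φ_j(x) · conj(φ_j(y)). Then for every finite set Ξ ⊆ M and every α : Ξ → ℂ with Σ_{ξ∈Ξ} α_ξ φ_j(ξ) = 0 for all j ∈ J, the quadratic form Σ_{ξ,ζ∈Ξ} α_ξ · conj(α_ζ) · k(ξ,ζ) is a nonnegative real number; moreover it is strictly positive whenever there exists some j ∈ ℕ with Σ_{ξ∈Ξ} α_ξ φ_j(ξ) ≠ 0. -/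
/-!
Expanding the kernel and exchanging the finite sums with the series turns the quadratic form into
`Σ_j k̃(j) |Σ_ξ α_ξ φ_j(ξ)|²`. The moment conditions kill the terms with `j ∈ J`, where `k̃(j)`
may be negative, and every other term is nonnegative; a nonzero moment gives a strictly positive
term, necessarily outside `J`.
-/

open ComplexConjugate

theorem Finset.sum_sum_mul_conj {ι : Type*} (s : Finset ι) (f : ι → ℂ) :
    ∑ ξ ∈ s, ∑ ζ ∈ s, f ξ * conj (f ζ) = (Complex.normSq (∑ ξ ∈ s, f ξ) : ℂ) := by
  rw [← Complex.mul_conj, map_sum, Finset.sum_mul_sum]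

theorem summable_mul_mul_conj_of_norm_le_one {M : Type*} {φ : ℕ → M → ℂ}
    (hφ : ∀ j, ∀ x : M, ‖φ j x‖ ≤ 1) {c : ℕ → ℝ} (hc : Summable fun j => |c j|) (x y : M) :
    Summable fun j => (c j : ℂ) * φ j x * conj (φ j y) := by
  refine Summable.of_norm_bounded hc fun j => ?_
  rw [norm_mul, norm_mul, Complex.norm_real, RCLike.norm_conj, Real.norm_eq_abs]
  calc |c j| * ‖φ j x‖ * ‖φ j y‖ ≤ |c j| * 1 * 1 := by gcongr <;> apply hφ
    _ = |c j| := by ring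

theorem hasSum_quadratic_form_of_kernel_expansion {M : Type*} {φ : ℕ → M → ℂ} {c : ℕ → ℝ}
    (hsum : ∀ x y : M, Summable fun j => (c j : ℂ) * φ j x * conj (φ j y)) (Ξ : Finset M)
    (α : M → ℂ) :
    HasSum (fun j => ((c j * Complex.normSq (∑ ξ ∈ Ξ, α ξ * φ j ξ) : ℝ) : ℂ))
      (∑ ξ ∈ Ξ, ∑ ζ ∈ Ξ, α ξ * conj (α ζ) * ∑' j, (c j : ℂ) * φ j ξ * conj (φ j ζ)) := by
  have hterms := hasSum_sum fun ξ (_ : ξ ∈ Ξ) => hasSum_sum fun ζ (_ : ζ ∈ Ξ) =>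
    ((hsum ξ ζ).hasSum.mul_left (α ξ * conj (α ζ)))
  refine hterms.congr_fun fun j => ?_
  simp only [Complex.ofReal_mul, ← Finset.sum_sum_mul_conj, Finset.mul_sum, map_mul]
  exact Finset.sum_congr rfl fun ξ _ => Finset.sum_congr rfl fun ζ _ => by ring

theorem kernel_conditionally_positive_definite_general
    {M : Type*}
    (φ : ℕ → M → ℂ) (hφ : ∀ j, ∀ x : M, ‖φ j x‖ ≤ 1)
    (ktil : ℕ → ℝ) (hk : Summable fun j => |ktil j|)
    (J : Finset ℕ) (hpos : ∀ j ∉ J, 0 < ktil j)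
    (k : M → M → ℂ)
    (hkdef : ∀ x y : M, k x y = ∑' j : ℕ, (ktil j : ℂ) * φ j x * conj (φ j y))
    (Ξ : Finset M) (α : M → ℂ)
    (hmom : ∀ j ∈ J, ∑ ξ ∈ Ξ, α ξ * φ j ξ = 0) :
    (0 ≤ (∑ ξ ∈ Ξ, ∑ ζ ∈ Ξ, α ξ * conj (α ζ) * k ξ ζ).re ∧
      (∑ ξ ∈ Ξ, ∑ ζ ∈ Ξ, α ξ * conj (α ζ) * k ξ ζ).im = 0) ∧
    ((∃ j : ℕ, ∑ ξ ∈ Ξ, α ξ * φ j ξ ≠ 0) →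
      0 < (∑ ξ ∈ Ξ, ∑ ζ ∈ Ξ, α ξ * conj (α ζ) * k ξ ζ).re) := by
  simp only [hkdef]
  obtain ⟨hre, him⟩ := (Complex.hasSum_iff _ _).1 <|
    hasSum_quadratic_form_of_kernel_expansion (summable_mul_mul_conj_of_norm_le_one hφ hk) Ξ α
  simp only [Complex.ofReal_re, Complex.ofReal_im] at hre him
  have hterm_nonneg : ∀ j, 0 ≤ ktil j * Complex.normSq (∑ ξ ∈ Ξ, α ξ * φ j ξ) := by
    intro j
    by_cases hj : j ∈ J
    · simp [hmom j hj]
    · exact mul_nonneg (hpos j hj).le (Complex.normSq_nonneg _)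
  refine ⟨⟨hre.nonneg hterm_nonneg, him.unique hasSum_zero⟩, ?_⟩
  rintro ⟨j, hj⟩
  have hjJ : j ∉ J := fun h => hj (hmom j h)
  exact hasSum_lt (f := 0) hterm_nonneg (mul_pos (hpos j hjJ) (Complex.normSq_pos.2 hj))
    hasSum_zero hre

/-- Conditional positive definiteness (Section 3.1): if `k(x,y) = Σ_j k̃(j) φ_j(x) conj(φ_j(y))`
with `k̃ ∈ ℓ¹`, uniformly bounded `φ_j`, and `k̃(j) > 0` for `j ∉ J`, then for any finite set of
centers `Ξ` and coefficients `α` satisfying the moment conditions over `J`, the quadratic form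
`Σ_{ξ,ζ} α_ξ conj(α_ζ) k(ξ,ζ)` is a nonnegative real number, strictly positive whenever some
moment `Σ_ξ α_ξ φ_j(ξ)` is nonzero. -/
theorem kernel_conditionally_positive_definite
    {M : Type*} [Nonempty M]
    (φ : ℕ → M → ℂ) (hφ : ∀ j, ∀ x : M, ‖φ j x‖ ≤ 1)
    (ktil : ℕ → ℝ) (hk : Summable fun j => |ktil j|)
    (J : Finset ℕ) (hpos : ∀ j ∉ J, 0 < ktil j)
    (k : M → M → ℂ)
    (hkdef : ∀ x y : M, k x y = ∑' j : ℕ, (ktil j : ℂ) * φ j x * conj (φ j y))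
    (Ξ : Finset M) (α : M → ℂ)
    (hmom : ∀ j ∈ J, ∑ ξ ∈ Ξ, α ξ * φ j ξ = 0) :
    (0 ≤ (∑ ξ ∈ Ξ, ∑ ζ ∈ Ξ, α ξ * conj (α ζ) * k ξ ζ).re ∧
      (∑ ξ ∈ Ξ, ∑ ζ ∈ Ξ, α ξ * conj (α ζ) * k ξ ζ).im = 0) ∧
    ((∃ j : ℕ, ∑ ξ ∈ Ξ, α ξ * φ j ξ ≠ 0) →
      0 < (∑ ξ ∈ Ξ, ∑ ζ ∈ Ξ, α ξ * conj (α ζ) * k ξ ζ).re) :=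
  kernel_conditionally_positive_definite_general φ hφ ktil hk J hpos k hkdef Ξ α hmom
end

section
/- Let d ≥ 1, let φ ∈ (0, π/2], R > 0, and set F(φ) := sin φ/(4(1 + sin φ)), r := 2RF(φ). Then for every x ∈ ℝ^d and every unit vector ξ ∈ ℝ^d, there exists a lattice point t ∈ (2r/√d)·ℤ^d such that the closed ball B(t, r) is contained in the cone C(x, ξ, φ, R). -/
open scoped RealInnerProductSpace

/-!
The closed ball of radius `λ sin φ` around `x + λ ξ` lies in the cone `C(x, ξ, φ, R)` as soon as
`λ (1 + sin φ) ≤ R`: every point `y` of it satisfies `‖y - x‖ ≤ λ + λ sin φ`, and its angle with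
`ξ` is at most `φ`. For `λ = R / (1 + sin φ)` that radius is `2r`. Rounding the centre
coordinatewise to the lattice of spacing `2r/√d` moves it by at most `√d · (r/√d) = r`, so the
ball of radius `r` around the rounded point still lies in the cone.
-/

/-- The cone with vertex `x`, axis direction `ξ`, half-angle `φ` and radius `R`:
`C(x, ξ, φ, R) = {x + λη : 0 ≤ λ ≤ R, ‖η‖ = 1, ⟨η, ξ⟩ ≥ cos φ}`. -/
def euclideanCone {d : ℕ} (x ξ : EuclideanSpace ℝ (Fin d)) (φ R : ℝ) :
    Set (EuclideanSpace ℝ (Fin d)) :=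
  {y | ∃ lam : ℝ, ∃ η : EuclideanSpace ℝ (Fin d),
    0 ≤ lam ∧ lam ≤ R ∧ ‖η‖ = 1 ∧ Real.cos φ ≤ ⟪η, ξ⟫ ∧ y = x + lam • η}

theorem EuclideanSpace.norm_le_sqrt_card_mul {ι : Type*} [Fintype ι] {v : EuclideanSpace ℝ ι}
    {M : ℝ} (hM : 0 ≤ M) (hv : ∀ i, |v i| ≤ M) : ‖v‖ ≤ √(Fintype.card ι) * M := by
  rw [EuclideanSpace.norm_eq, ← Real.sqrt_sq hM, ← Real.sqrt_mul (Nat.cast_nonneg _)]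
  gcongr
  calc ∑ i, ‖v i‖ ^ 2 ≤ ∑ _i : ι, M ^ 2 := by
        gcongr with i
        rw [Real.norm_eq_abs]
        exact hv i
    _ = Fintype.card ι * M ^ 2 := by simp

theorem EuclideanSpace.exists_int_lattice_norm_sub_le {d : ℕ} (c : EuclideanSpace ℝ (Fin d))
    {h : ℝ} (hh : 0 < h) :
    ∃ z : Fin d → ℤ, ‖WithLp.toLp 2 (fun i => h * z i) - c‖ ≤ √d * (h / 2) := by
  refine ⟨fun i => round (c i / h), ?_⟩
  refine (EuclideanSpace.norm_le_sqrt_card_mul (M := h / 2) (by positivity) fun i => ?_).trans_eq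
    (by simp)
  have hround : h * round (c i / h) - c i = h * (round (c i / h) - c i / h) := by
    field_simp
  rw [PiLp.sub_apply, hround, abs_mul, abs_of_pos hh, abs_sub_comm]
  exact mul_le_mul_of_nonneg_left ((abs_sub_round _).trans_eq (one_div 2)) hh.le

theorem cos_mul_norm_le_inner_of_norm_sub_smul_le {E : Type*} [NormedAddCommGroup E]
    [InnerProductSpace ℝ E] {v ξ : E} (hξ : ‖ξ‖ = 1) {lam φ : ℝ} (hlam : 0 ≤ lam)
    (hφ : 0 ≤ Real.cos φ) (hv : ‖v - lam • ξ‖ ≤ lam * Real.sin φ) :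
    Real.cos φ * ‖v‖ ≤ ⟪v, ξ⟫ := by
  set p := ⟪v, ξ⟫
  have hdist : ‖v‖ ^ 2 - 2 * lam * p + lam ^ 2 * Real.cos φ ^ 2 ≤ 0 := by
    have hsq := pow_le_pow_left₀ (norm_nonneg _) hv 2
    rw [norm_sub_sq_real, norm_smul, real_inner_smul_right, Real.norm_eq_abs, abs_of_nonneg hlam,
      hξ] at hsq
    nlinarith [Real.sin_sq_add_cos_sq φ]
  have hp : p ^ 2 ≤ ‖v‖ ^ 2 := by
    simpa [hξ] using pow_le_pow_left₀ (abs_nonneg _) (abs_real_inner_le_norm v ξ) 2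
  have hp0 : 0 ≤ p := by nlinarith [sq_nonneg (lam * Real.cos φ)]
  -- `cos² φ ‖v‖² ≤ cos² φ (2 lam p - lam² cos² φ) = p² - (p - lam cos² φ)²`
  refine (pow_le_pow_iff_left₀ (by positivity) hp0 two_ne_zero).1 ?_
  nlinarith [sq_nonneg (p - lam * Real.cos φ ^ 2), sq_nonneg (Real.cos φ)]

theorem mem_euclideanCone_of_norm_le {d : ℕ} {x ξ y : EuclideanSpace ℝ (Fin d)} (hξ : ‖ξ‖ = 1)
    {φ R : ℝ} (hR : ‖y - x‖ ≤ R) (hφ : Real.cos φ * ‖y - x‖ ≤ ⟪y - x, ξ⟫) :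
    y ∈ euclideanCone x ξ φ R := by
  rcases eq_or_ne (y - x) 0 with hyx | hyx
  · refine ⟨0, ξ, le_rfl, by simpa [hyx] using hR, hξ, ?_, by simpa using sub_eq_zero.1 hyx⟩
    simpa [real_inner_self_eq_norm_sq, hξ] using Real.cos_le_one φ
  · have hpos : 0 < ‖y - x‖ := norm_pos_iff.2 hyx
    refine ⟨‖y - x‖, ‖y - x‖⁻¹ • (y - x), norm_nonneg _, hR, ?_, ?_, ?_⟩
    · rw [norm_smul, norm_inv, norm_norm, inv_mul_cancel₀ hpos.ne']
    · rw [real_inner_smul_left, ← div_eq_inv_mul, le_div_iff₀ hpos]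
      exact hφ
    · rw [smul_smul, mul_inv_cancel₀ hpos.ne', one_smul, add_sub_cancel]

theorem closedBall_subset_euclideanCone {d : ℕ} {x ξ : EuclideanSpace ℝ (Fin d)} (hξ : ‖ξ‖ = 1)
    {φ lam R : ℝ} (hφ : 0 ≤ Real.cos φ) (hlam : 0 ≤ lam) (hR : lam * (1 + Real.sin φ) ≤ R) :
    Metric.closedBall (x + lam • ξ) (lam * Real.sin φ) ⊆ euclideanCone x ξ φ R := by
  intro y hy
  rw [Metric.mem_closedBall, dist_eq_norm, ← sub_sub] at hy
  refine mem_euclideanCone_of_norm_le hξ ?_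
    (cos_mul_norm_le_inner_of_norm_sub_smul_le hξ hlam hφ hy)
  calc ‖y - x‖ ≤ ‖lam • ξ‖ + ‖y - x - lam • ξ‖ := norm_le_norm_add_norm_sub' _ _
    _ ≤ lam + lam * Real.sin φ := by
      rw [norm_smul, Real.norm_eq_abs, abs_of_nonneg hlam, hξ, mul_one]
      gcongr
    _ ≤ R := by linarith

/-- Key covering step in Duchon's construction (proof of Theorem A.3): with
`F(φ) = sin φ / (4(1 + sin φ))` and `r = 2 R F(φ)`, every cone of radius `R` and half-angle
`φ` contains a closed ball of radius `r` centered at a point of the lattice `(2r/√d)ℤ^d`. -/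
theorem lattice_ball_in_cone
    {d : ℕ} (hd : 1 ≤ d) (φ R : ℝ) (hφ : φ ∈ Set.Ioc 0 (Real.pi / 2)) (hR : 0 < R)
    (F r : ℝ) (hF : F = Real.sin φ / (4 * (1 + Real.sin φ))) (hr : r = 2 * R * F)
    (x ξ : EuclideanSpace ℝ (Fin d)) (hξ : ‖ξ‖ = 1) :
    ∃ t : EuclideanSpace ℝ (Fin d),
      (∃ z : Fin d → ℤ, ∀ i, t i = (2 * r / Real.sqrt d) * z i) ∧
      Metric.closedBall t r ⊆ euclideanCone x ξ φ R := by
  have hsin : 0 < Real.sin φ :=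
    Real.sin_pos_of_pos_of_lt_pi hφ.1 (hφ.2.trans_lt (by linarith [Real.pi_pos]))
  have hcos : 0 ≤ Real.cos φ :=
    Real.cos_nonneg_of_mem_Icc ⟨by linarith [hφ.1, Real.pi_pos], hφ.2⟩
  have hsqrt : 0 < √(d : ℝ) := Real.sqrt_pos.2 (by exact_mod_cast hd)
  have hrpos : 0 < r := by rw [hr, hF]; positivity
  set lam := R / (1 + Real.sin φ) with hlam_def
  have hlamR : lam * (1 + Real.sin φ) = R := by rw [hlam_def]; field_simp
  have hlam : lam * Real.sin φ = 2 * r := by rw [hr, hF, hlam_def]; field_simp; ring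
  obtain ⟨z, hz⟩ :=
    EuclideanSpace.exists_int_lattice_norm_sub_le (x + lam • ξ) (by positivity : 0 < 2 * r / √d)
  refine ⟨WithLp.toLp 2 fun i => 2 * r / √d * z i, ⟨z, fun i => rfl⟩, ?_⟩
  refine (Metric.closedBall_subset_closedBall' ?_).trans
    (hlam ▸ closedBall_subset_euclideanCone hξ hcos (by positivity) hlamR.le)
  rw [dist_eq_norm, two_mul, add_le_add_iff_left]
  exact hz.trans_eq (by field_simp)
end

section
/- Let d ≥ 1 and m ≥ 0 be integers. There is a constant C depending only on m and d such that the following holds: for every measurable set A ⊆ ℝ^d, every t > 0, every m-times continuously differentiable φ : ℝ^d → ℝ satisfying ‖D^i φ(x)‖ ≤ t^{−i} for all x ∈ A and all 0 ≤ i ≤ m, every m-times continuously differentiable u : ℝ^d → ℝ, and every 0 ≤ k ≤ m, one has ∫_A ‖D^k(φ·u)(x)‖² dx ≤ C · Σ_{j=0}^{k} t^{2(j−k)} ∫_A ‖D^j u(x)‖² dx. -/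
open Finset MeasureTheory
open scoped ENNReal NNReal

/-!
By the Leibniz rule, `‖D^k(φu)‖ ≤ Σ_i C(k,i) ‖D^i φ‖ ‖D^{k-i} u‖ ≤ 2^k Σ_i t^{-i} ‖D^{k-i} u‖`
on `A`. Squaring and applying Cauchy–Schwarz to the `k + 1` terms gives
`‖D^k(φu)‖² ≤ (k+1) 4^k Σ_j t^{2(j-k)} ‖D^j u‖²` pointwise on `A`, which integrates to the claim
with `C = (m+1) 4^m`.
-/

section Pointwise

variable {𝕜 E A : Type*} [NontriviallyNormedField 𝕜] [NormedAddCommGroup E] [NormedSpace 𝕜 E]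
  [NormedRing A] [NormedAlgebra 𝕜 A] {φ u : E → A} {k : ℕ} {x : E} {t : ℝ}

theorem norm_iteratedFDeriv_mul_le_of_norm_iteratedFDeriv_le_inv_pow
    (hφ : ContDiff 𝕜 k φ) (hu : ContDiff 𝕜 k u)
    (hφx : ∀ i ≤ k, ‖iteratedFDeriv 𝕜 i φ x‖ ≤ (t ^ i)⁻¹) :
    ‖iteratedFDeriv 𝕜 k (fun y => φ y * u y) x‖ ≤
      2 ^ k * ∑ i ∈ range (k + 1), (t ^ i)⁻¹ * ‖iteratedFDeriv 𝕜 (k - i) u x‖ := by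
  rw [mul_sum]
  refine (norm_iteratedFDeriv_mul_le hφ hu x le_rfl).trans (sum_le_sum fun i hi => ?_)
  have hchoose : (k.choose i : ℝ) ≤ 2 ^ k := by exact_mod_cast Nat.choose_le_two_pow k i
  have hφi := hφx i (mem_range_succ_iff.mp hi)
  rw [← mul_assoc]
  gcongr

theorem sq_norm_iteratedFDeriv_mul_le_of_norm_iteratedFDeriv_le_inv_pow
    (hφ : ContDiff 𝕜 k φ) (hu : ContDiff 𝕜 k u)
    (hφx : ∀ i ≤ k, ‖iteratedFDeriv 𝕜 i φ x‖ ≤ (t ^ i)⁻¹) :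
    ‖iteratedFDeriv 𝕜 k (fun y => φ y * u y) x‖ ^ 2 ≤
      (k + 1) * 4 ^ k * ∑ j ∈ range (k + 1),
        (t ^ (2 * (k - j)))⁻¹ * ‖iteratedFDeriv 𝕜 j u x‖ ^ 2 := by
  set a : ℕ → ℝ := fun i => (t ^ i)⁻¹ * ‖iteratedFDeriv 𝕜 (k - i) u x‖
  have hreflect : ∑ i ∈ range (k + 1), a i ^ 2 =
      ∑ j ∈ range (k + 1), (t ^ (2 * (k - j)))⁻¹ * ‖iteratedFDeriv 𝕜 j u x‖ ^ 2 := by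
    rw [← sum_range_reflect]
    refine sum_congr rfl fun i hi => ?_
    have hik := mem_range_succ_iff.mp hi
    rw [show k + 1 - 1 - i = k - i by omega]
    simp only [a]
    rw [show k - (k - i) = i by omega, mul_pow, inv_pow, ← pow_mul, mul_comm (k - i)]
  calc ‖iteratedFDeriv 𝕜 k (fun y => φ y * u y) x‖ ^ 2
      ≤ (2 ^ k * ∑ i ∈ range (k + 1), a i) ^ 2 := by
        gcongr
        exact norm_iteratedFDeriv_mul_le_of_norm_iteratedFDeriv_le_inv_pow hφ hu hφx
    _ = 4 ^ k * (∑ i ∈ range (k + 1), a i) ^ 2 := by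
        rw [mul_pow, ← pow_mul, mul_comm k, pow_mul]
        norm_num
    _ ≤ 4 ^ k * ((k + 1) * ∑ i ∈ range (k + 1), a i ^ 2) := by
        gcongr
        simpa using sq_sum_le_card_mul_sum_sq (s := range (k + 1)) (f := a)
    _ = _ := by rw [hreflect]; ring

end Pointwise

theorem coe_nnnorm_sq_eq_ofReal_norm_sq {F : Type*} [SeminormedAddGroup F] (v : F) :
    (‖v‖₊ : ℝ≥0∞) ^ 2 = ENNReal.ofReal (‖v‖ ^ 2) := by
  rw [ENNReal.ofReal_pow (norm_nonneg _), ofReal_norm, enorm_eq_nnnorm]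

theorem setLIntegral_le_mul_sum_mul_setLIntegral {α ι : Type*} [MeasurableSpace α]
    {μ : Measure α} {s : Set α} {I : Finset ι} {f : α → ℝ≥0∞} {g : ι → α → ℝ≥0∞}
    (c : ℝ≥0∞) (w : ι → ℝ≥0∞) (hg : ∀ j ∈ I, Measurable (g j))
    (hfg : ∀ x ∈ s, f x ≤ c * ∑ j ∈ I, w j * g j x) :
    ∫⁻ x in s, f x ∂μ ≤ c * ∑ j ∈ I, w j * ∫⁻ x in s, g j x ∂μ := by
  have hwg : ∀ j ∈ I, Measurable fun x => w j * g j x := fun j hj => (hg j hj).const_mul _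
  calc ∫⁻ x in s, f x ∂μ ≤ ∫⁻ x in s, c * ∑ j ∈ I, w j * g j x ∂μ :=
        setLIntegral_mono ((Finset.measurable_sum _ hwg).const_mul _) hfg
    _ = c * ∑ j ∈ I, w j * ∫⁻ x in s, g j x ∂μ := by
        rw [lintegral_const_mul _ (Finset.measurable_sum _ hwg), lintegral_finsetSum _ hwg]
        congr 1
        exact sum_congr rfl fun j hj => lintegral_const_mul _ (hg j hj)

theorem product_rule_estimate_general
    {d : ℕ} (m : ℕ) :
    ∃ C : ℝ, 0 < C ∧ ∀ (A : Set (EuclideanSpace ℝ (Fin d))), MeasurableSet A →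
      ∀ t : ℝ, 0 < t →
      ∀ φ u : EuclideanSpace ℝ (Fin d) → ℝ,
      ContDiff ℝ (m : ℕ∞) φ → ContDiff ℝ (m : ℕ∞) u →
      (∀ x ∈ A, ∀ i ≤ m, ‖iteratedFDeriv ℝ i φ x‖ ≤ (t ^ i)⁻¹) →
      ∀ k ≤ m,
      (∫⁻ x in A, (‖iteratedFDeriv ℝ k (fun y => φ y * u y) x‖₊ : ℝ≥0∞) ^ 2)
        ≤ ENNReal.ofReal C * ∑ j ∈ Finset.range (k + 1),
            ENNReal.ofReal ((t ^ (2 * (k - j)))⁻¹) *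
              ∫⁻ x in A, (‖iteratedFDeriv ℝ j u x‖₊ : ℝ≥0∞) ^ 2 := by
  refine ⟨(m + 1) * 4 ^ m, by positivity, fun A _ t _ φ u hφ hu hφA k hk => ?_⟩
  have hkm : (k : WithTop ℕ∞) ≤ m := by exact_mod_cast hk
  have hmeas : ∀ j ∈ range (k + 1),
      Measurable fun x => (‖iteratedFDeriv ℝ j u x‖₊ : ℝ≥0∞) ^ 2 := fun j hj =>
    have hjm : (j : WithTop ℕ∞) ≤ m := by exact_mod_cast (mem_range_succ_iff.mp hj).trans hk
    (hu.continuous_iteratedFDeriv hjm).nnnorm.measurable.coe_nnreal_ennreal.pow_const 2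
  refine setLIntegral_le_mul_sum_mul_setLIntegral _ _ hmeas fun x hx => ?_
  have hreal := sq_norm_iteratedFDeriv_mul_le_of_norm_iteratedFDeriv_le_inv_pow
    (hφ.of_le hkm) (hu.of_le hkm) fun i hi => hφA x hx i (hi.trans hk)
  have hconst : ((k : ℝ) + 1) * 4 ^ k ≤ (m + 1) * 4 ^ m := by
    gcongr
    norm_num
  have hw : ∀ j, 0 ≤ (t ^ (2 * (k - j)))⁻¹ := fun j => by
    rw [pow_mul]; positivity
  have hsum : 0 ≤ ∑ j ∈ range (k + 1), (t ^ (2 * (k - j)))⁻¹ * ‖iteratedFDeriv ℝ j u x‖ ^ 2 :=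
    sum_nonneg fun j _ => mul_nonneg (hw j) (sq_nonneg _)
  simp only [coe_nnnorm_sq_eq_ofReal_norm_sq, ← ENNReal.ofReal_mul (hw _)]
  rw [← ENNReal.ofReal_sum_of_nonneg fun j _ => mul_nonneg (hw j) (sq_nonneg _),
    ← ENNReal.ofReal_mul (by positivity)]
  exact ENNReal.ofReal_le_ofReal (hreal.trans (mul_le_mul_of_nonneg_right hconst hsum))

/-- Euclidean product-rule estimate at the core of Lemma 5.4 (product_rule): if the
derivatives of the cutoff `φ` satisfy `‖D^i φ(x)‖ ≤ t^{−i}` on `A` for `0 ≤ i ≤ m`, then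
for every `0 ≤ k ≤ m`,
`∫_A ‖D^k(φ·u)‖² ≤ C Σ_{j=0}^{k} t^{2(j−k)} ∫_A ‖D^j u‖²`, with `C = C(m, d)`. -/
theorem product_rule_estimate
    {d : ℕ} (hd : 1 ≤ d) (m : ℕ) :
    ∃ C : ℝ, 0 < C ∧ ∀ (A : Set (EuclideanSpace ℝ (Fin d))), MeasurableSet A →
      ∀ t : ℝ, 0 < t →
      ∀ φ u : EuclideanSpace ℝ (Fin d) → ℝ,
      ContDiff ℝ (m : ℕ∞) φ → ContDiff ℝ (m : ℕ∞) u →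
      (∀ x ∈ A, ∀ i ≤ m, ‖iteratedFDeriv ℝ i φ x‖ ≤ (t ^ i)⁻¹) →
      ∀ k ≤ m,
      (∫⁻ x in A, (‖iteratedFDeriv ℝ k (fun y => φ y * u y) x‖₊ : ℝ≥0∞) ^ 2)
        ≤ ENNReal.ofReal C * ∑ j ∈ Finset.range (k + 1),
            ENNReal.ofReal ((t ^ (2 * (k - j)))⁻¹) *
              ∫⁻ x in A, (‖iteratedFDeriv ℝ j u x‖₊ : ℝ≥0∞) ^ 2 :=
  product_rule_estimate_general m
end
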